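/- arXiv:1212.1378 — 2 statements merged into one kernel-verified Lean document; each statement's English description precedes it below -/
import Mathlib

section
/- For every integer N ≥ 3, the operators e_j (1 ≤ j ≤ N−1) on ℂ^{2^N} satisfy the Temperley–Lieb relations at zero fugacity: e_j² = 0 for all 1 ≤ j ≤ N−1; e_j e_{j+1} e_j = e_j and e_{j+1} e_j e_{j+1} = e_{j+1} for all 1 ≤ j ≤ N−2; and e_i e_j = e_j e_i whenever |i−j| > 1. -/
open Matrix Complex BigOperators Finset

noncomputable section

namespace LatticeW

/-- basis states of the chain of `N` spin-1/2 sites -/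
abbrev St (N : ℕ) := Fin N → Fin 2
/-- operators on `ℂ^{2^N}` -/
abbrev Op (N : ℕ) := Matrix (St N) (St N) ℂ

def σx : Matrix (Fin 2) (Fin 2) ℂ := !![0, 1; 1, 0]
def σy : Matrix (Fin 2) (Fin 2) ℂ := !![0, -Complex.I; Complex.I, 0]
def σz : Matrix (Fin 2) (Fin 2) ℂ := !![1, 0; 0, -1]
def σp : Matrix (Fin 2) (Fin 2) ℂ := (1/2 : ℂ) • (σx + Complex.I • σy)
def σm : Matrix (Fin 2) (Fin 2) ℂ := (1/2 : ℂ) • (σx - Complex.I • σy)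

/-- the operator acting as `M` on the (0-indexed) site `j` and as the identity
elsewhere; junk value `0` if `j` is out of range. -/
def site (N : ℕ) (j : ℕ) (M : Matrix (Fin 2) (Fin 2) ℂ) : Op N :=
  if h : j < N then
    (fun v w => if ∀ l, l ≠ (⟨j, h⟩ : Fin N) → v l = w l then M (v ⟨j, h⟩) (w ⟨j, h⟩) else 0)
  else 0

/-- diagonal value of σ^z on a one-site basis state -/
def zval (t : Fin 2) : ℂ := if t = 0 then 1 else -1

/-- Jordan–Wigner creation operator `c_j†` (0-indexed `j`; paper index `j+1`):
`c_j† = i^{j} (∏_{l<j} i σ^z_l) σ^+_j`. -/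
def ad (N : ℕ) (j : ℕ) : Op N :=
  Complex.I ^ j •
    (Matrix.diagonal (fun v : St N =>
        ∏ l ∈ Finset.univ.filter (fun l : Fin N => (l : ℕ) < j), (Complex.I * zval (v l)))
      * site N j σp)

/-- Jordan–Wigner annihilation operator `c_j` (0-indexed `j`):
`c_j = i^{-j} (∏_{l<j} (i σ^z_l)⁻¹) σ^-_j`. -/
def an (N : ℕ) (j : ℕ) : Op N :=
  (Complex.I ^ j)⁻¹ •
    (Matrix.diagonal (fun v : St N =>
        ∏ l ∈ Finset.univ.filter (fun l : Fin N => (l : ℕ) < j), (Complex.I * zval (v l))⁻¹)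
      * site N j σm)

/-- Temperley–Lieb density `e_{j+1}` of the paper (0-indexed `j`). -/
def eTL (N : ℕ) (j : ℕ) : Op N :=
  an N j * ad N (j+1) + an N (j+1) * ad N j
    + Complex.I • (ad N j * an N j - ad N (j+1) * an N (j+1))

/-- the XX Hamiltonian `H = -∑ e_j`. -/
def Hop (N : ℕ) : Op N := -∑ j ∈ Finset.range (N - 1), eTL N j

/-- `ρ(K) = ⊗_j (i σ^z)`. -/
def Kop (N : ℕ) : Op N := Matrix.diagonal (fun v : St N => ∏ l, (Complex.I * zval (v l)))

/-- `ρ(E) = (∑_{j=1}^N i^j c_j†) ρ(K)` (paper indices). -/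
def Eop (N : ℕ) : Op N := (∑ j ∈ Finset.range N, Complex.I ^ (j+1) • ad N j) * Kop N

/-- `ρ(F) = ∑_{j=1}^N i^{j-1} c_j` (paper indices). -/
def Fop (N : ℕ) : Op N := ∑ j ∈ Finset.range N, Complex.I ^ j • an N j

/-- divided power `ρ(e) = ∑_{j1<j2} (-1)^{j1+j2} i^{1-j1-j2} c_{j1}† c_{j2}†` (paper indices). -/
def sl2e (N : ℕ) : Op N :=
  ∑ j2 ∈ Finset.range N, ∑ j1 ∈ Finset.range j2,
    ((-1 : ℂ) ^ (j1 + j2) * (Complex.I ^ (j1 + j2 + 1))⁻¹) • (ad N j1 * ad N j2)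

/-- divided power `ρ(f) = ∑_{j1<j2} i^{j1+j2-1} c_{j1} c_{j2}` (paper indices). -/
def sl2f (N : ℕ) : Op N :=
  ∑ j2 ∈ Finset.range N, ∑ j1 ∈ Finset.range j2,
    (Complex.I ^ (j1 + j2 + 1)) • (an N j1 * an N j2)

/-- `WB^+_{j+1}` of the paper (0-indexed `j`). -/
def WBp (N : ℕ) (j : ℕ) : Op N :=
  (-1 : ℂ) ^ (j+1) •
    (ad N j * ad N (j+1) + Complex.I • (ad N j * ad N (j+2)) - ad N (j+1) * ad N (j+2))

/-- `WB^0_{j+1}` of the paper (0-indexed `j`). -/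
def WB0 (N : ℕ) (j : ℕ) : Op N :=
  (-(1/2) : ℂ) •
    ((1 : Op N) + Complex.I • (ad N j * an N (j+1)) - ad N j * an N (j+2)
      + Complex.I • (ad N (j+1) * an N j) - (2 : ℂ) • (ad N (j+1) * an N (j+1))
      - Complex.I • (ad N (j+1) * an N (j+2)) - ad N (j+2) * an N j
      - Complex.I • (ad N (j+2) * an N (j+1)))

/-- `WB^-_{j+1}` of the paper (0-indexed `j`). -/
def WBm (N : ℕ) (j : ℕ) : Op N :=
  (-1 : ℂ) ^ j •
    (an N j * an N (j+1) + Complex.I • (an N j * an N (j+2)) - an N (j+1) * an N (j+2))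

/-- `WB^α_j` with `α = 0 ↦ +`, `α = 1 ↦ 0`, `α = 2 ↦ -`. -/
def WB (N : ℕ) (α : Fin 3) (j : ℕ) : Op N :=
  match α with
  | 0 => WBp N j
  | 1 => WB0 N j
  | 2 => WBm N j

/-- the Fourier amplitudes `A_k(j)` (both `k` and `j` paper-indexed). -/
def Afun (N k j : ℕ) : ℂ :=
  (1/2 : ℂ) * (1 + Complex.I * Complex.exp (-(Complex.I * (Real.pi : ℂ) * (k : ℂ) / (N : ℂ))))
      * Complex.exp (Complex.I * (Real.pi : ℂ) * (k : ℂ) * (j : ℂ) / (N : ℂ))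
  - (1/2 : ℂ) * (1 + Complex.I * Complex.exp (Complex.I * (Real.pi : ℂ) * (k : ℂ) / (N : ℂ)))
      * Complex.exp (-(Complex.I * (Real.pi : ℂ) * (k : ℂ) * (j : ℂ) / (N : ℂ)))

/-- `θ†_k = ∑_{j=1}^N A_k(j) c_j†` (paper indices). -/
def θd (N k : ℕ) : Op N := ∑ j ∈ Finset.range N, Afun N k (j+1) • ad N j

/-- `θ_k = -i ∑_{j=1}^N A_k(j) c_j` (paper indices). -/
def θa (N k : ℕ) : Op N := (-Complex.I) • ∑ j ∈ Finset.range N, Afun N k (j+1) • an N j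

/-- the normalization `sqrt(n/(N sin(πn/N)))` for `n ≠ 0`, and `1/√π` for `n = 0`. -/
def ηcoef (N : ℕ) (n : ℤ) : ℂ :=
  if n = 0 then ((Real.sqrt Real.pi)⁻¹ : ℝ)
  else ((Real.sqrt ((n : ℝ) / ((N : ℝ) * Real.sin (Real.pi * (n : ℝ) / (N : ℝ)))) : ℝ) : ℂ)

/-- `η^+_n` -/
def ηp (N : ℕ) (n : ℤ) : Op N := ηcoef N n • θd N ((N : ℤ)/2 + n).toNat

/-- `η^-_n` -/
def ηm (N : ℕ) (n : ℤ) : Op N := ηcoef N n • θa N ((N : ℤ)/2 - n).toNat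

/-- coefficient `(N/2 - j + (1-(-1)^j)/2) i^j` (paper index `j`). -/
def γcoef (N j : ℕ) : ℂ :=
  ((N : ℂ)/2 - (j : ℂ) + (1 - (-1 : ℂ)^j)/2) * Complex.I ^ j

/-- the root vector `γ^+`. -/
def γp (N : ℕ) : Op N :=
  (Complex.I * (Real.sqrt Real.pi : ℂ) / (N : ℂ)) •
    ∑ j ∈ Finset.range N, γcoef N (j+1) • ad N j

/-- the root vector `γ^-`. -/
def γm (N : ℕ) : Op N :=
  (-((Real.sqrt Real.pi : ℂ) / (N : ℂ))) •
    ∑ j ∈ Finset.range N, γcoef N (j+1) • an N j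

/-- Kronecker delta -/
def kδ (a b : ℤ) : ℂ := if a = b then 1 else 0

/-- `s(j) = sqrt(sin(πj/N)/j)` with the convention `π/N` at `j = 0`. -/
def sfun (N : ℕ) (j : ℤ) : ℂ :=
  if j = 0 then ((Real.sqrt (Real.pi / (N : ℝ)) : ℝ) : ℂ)
  else ((Real.sqrt (Real.sin (Real.pi * (j : ℝ) / (N : ℝ)) / (j : ℝ)) : ℝ) : ℂ)

/-- the index range `-N/2+1 ≤ j ≤ N/2-1`. -/
def modeRange (N : ℕ) : Finset ℤ := Finset.Icc (-(N : ℤ)/2 + 1) ((N : ℤ)/2 - 1)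

/-- the coefficient appearing in `Ĥ^r_n`. -/
def Hcoef (N : ℕ) (r : ℕ) (n j1 j2 : ℤ) : ℂ :=
  ((Real.cos (Real.pi * ((j1 - j2 : ℤ) : ℝ) / (2 * (N : ℝ))) : ℝ) : ℂ)^r *
      ((-1 : ℂ)^r * kδ (j1 + j2) n + kδ (j1 + j2) (-n))
    - ((Real.sin (Real.pi * ((j1 + j2 : ℤ) : ℝ) / (2 * (N : ℝ))) : ℝ) : ℂ)^r *
      (kδ (j1 - j2) ((N : ℤ) + n) + kδ (j1 - j2) (-(N : ℤ) - n)
        + (-1 : ℂ)^r * kδ (j1 - j2) ((N : ℤ) - n) + (-1 : ℂ)^r * kδ (j1 - j2) (-(N : ℤ) + n))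

/-- the lattice Virasoro mode `Ĥ^r_n`. -/
def Hhat (N : ℕ) (r : ℕ) (n : ℤ) : Op N :=
  ∑ j1 ∈ modeRange N, ∑ j2 ∈ modeRange N,
    (sfun N j1 * sfun N j2 * Hcoef N r n j1 j2) • (ηp N j1 * ηm N j2)

/-- the coefficient `U_{r,n}(j1,j2)`. -/
def Ucoef (N : ℕ) (r : ℕ) (n j1 j2 : ℤ) : ℂ :=
  ((Real.sin (Real.pi * ((j1 - j2 : ℤ) : ℝ) / (2 * (N : ℝ))) : ℝ) : ℂ)
      * ((Real.cos (Real.pi * ((j1 - j2 : ℤ) : ℝ) / (2 * (N : ℝ))) : ℝ) : ℂ)^r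
      * ((-1 : ℂ)^r * kδ (j1 + j2) n + kδ (j1 + j2) (-n))
    + 2 * ((Real.cos (Real.pi * ((j1 + j2 : ℤ) : ℝ) / (2 * (N : ℝ))) : ℝ) : ℂ)
      * ((Real.sin (Real.pi * ((j1 + j2 : ℤ) : ℝ) / (2 * (N : ℝ))) : ℝ) : ℂ)^r
      * (kδ (j1 - j2) (-(N : ℤ) - n) + (-1 : ℂ)^r * kδ (j1 - j2) (-(N : ℤ) + n))

/-- the lattice W-algebra mode `Ŵ^{α,r}_n` with `α = 0 ↦ +`, `α = 1 ↦ 0`, `α = 2 ↦ -`. -/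
def What (N : ℕ) (α : Fin 3) (r : ℕ) (n : ℤ) : Op N :=
  ∑ j1 ∈ modeRange N, ∑ j2 ∈ modeRange N,
    (sfun N j1 * sfun N j2 * Ucoef N r n j1 j2) •
      (match α with
        | 0 => ηp N j1 * ηp N j2
        | 1 => ηp N j1 * ηm N j2 + ηm N j1 * ηp N j2
        | 2 => ηm N j1 * ηm N j2)

/-- the all-spins-down reference state. -/
def downSt (N : ℕ) : St N → ℂ := fun v => if ∀ j, v j = 1 then 1 else 0

/-- the vacuum `|0⟩ = θ†_{N/2} θ†_{N/2+1} ⋯ θ†_{N-1} |↓…↓⟩`. -/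
def vac (N : ℕ) : St N → ℂ :=
  (((List.range (N/2)).map (fun t => θd N (N/2 + t))).prod).mulVec (downSt N)

/-- the logarithmic partner `|0̃⟩ = γ^+ θ†_{N/2+1} ⋯ θ†_{N-1} |↓…↓⟩`. -/
def vacTilde (N : ℕ) : St N → ℂ :=
  (γp N * (((List.range (N/2 - 1)).map (fun t => θd N (N/2 + 1 + t))).prod)).mulVec (downSt N)

/-- the total spin `S^z = ½ ∑_j σ^z_j`. -/
def Sz (N : ℕ) : Op N := (1/2 : ℂ) • ∑ j ∈ Finset.range N, site N j σz

/- ************ XXZ spin-chain at generic q (statement 19) ************ -/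

/-- the single-site diagonal `diag(q, q⁻¹)` evaluated on a basis state. -/
def dq (q : ℂ) : Fin 2 → ℂ := fun t => if t = 0 then q else q⁻¹

/-- the XXZ Temperley–Lieb density `e_{i+1}` of the paper (0-indexed `i`). -/
def eXXZ (N : ℕ) (q : ℂ) (i : ℕ) : Op N :=
  ((q + q⁻¹)/4) • (1 : Op N)
    - (1/2 : ℂ) • (site N i σx * site N (i+1) σx + site N i σy * site N (i+1) σy)
    - ((q + q⁻¹)/4) • (site N i σz * site N (i+1) σz)
    + ((q - q⁻¹)/4) • (site N i σz - site N (i+1) σz)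

/-- the XXZ Hamiltonian with quantum-group symmetric boundary terms. -/
def HXXZ (N : ℕ) (q : ℂ) : Op N :=
  (1/2 : ℂ) • ∑ i ∈ Finset.range (N - 1),
      (site N i σx * site N (i+1) σx + site N i σy * site N (i+1) σy
        + ((q + q⁻¹)/2) • (site N i σz * site N (i+1) σz))
    - ((q - q⁻¹)/4) • (site N 0 σz - site N (N-1) σz)

/-- `K_N = ⊗_j diag(q,q⁻¹)`. -/
def KXXZ (N : ℕ) (q : ℂ) : Op N := Matrix.diagonal (fun v : St N => ∏ l, dq q (v l))

/-- `E_N = ∑_j σ^+_j ⊗ ∏_{l>j} diag(q,q⁻¹)_l`. -/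
def EXXZ (N : ℕ) (q : ℂ) : Op N :=
  ∑ j ∈ Finset.range N,
    site N j σp *
      Matrix.diagonal (fun v : St N =>
        ∏ l ∈ Finset.univ.filter (fun l : Fin N => j < (l : ℕ)), dq q (v l))

/-- `F_N = ∑_j (∏_{l<j} diag(q⁻¹,q)_l) ⊗ σ^-_j`. -/
def FXXZ (N : ℕ) (q : ℂ) : Op N :=
  ∑ j ∈ Finset.range N,
    Matrix.diagonal (fun v : St N =>
        ∏ l ∈ Finset.univ.filter (fun l : Fin N => (l : ℕ) < j), (dq q (v l))⁻¹) *
      site N j σm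

end LatticeW

/-!
The Jordan–Wigner strings cancel in the bilinears `c_j c_{j+1}†`, `c_{j+1} c_j†` and `c_j† c_j`, so
`e_j = -σ⁻_j σ⁺_{j+1} - σ⁺_j σ⁻_{j+1} + i (n_j - n_{j+1})` with `n = σ⁺σ⁻`: a two-site operator.
The Temperley–Lieb relations then hold for this expression in any algebra containing mutually
commuting copies of `M₂(ℂ)`, where they reduce to the multiplication table of `σ⁺`, `σ⁻`, `n`
after normal-ordering the copies.
-/

namespace LatticeW

open Kronecker

def nUp : Matrix (Fin 2) (Fin 2) ℂ := !![1, 0; 0, 0]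

lemma σp_eq : σp = !![0, 1; 0, 0] := by
  ext i j; fin_cases i <;> fin_cases j <;> norm_num [σp, σx, σy]

lemma σm_eq : σm = !![0, 0; 1, 0] := by
  ext i j; fin_cases i <;> fin_cases j <;> norm_num [σm, σx, σy]

lemma σp_mul_σm : σp * σm = nUp := by
  ext i j; fin_cases i <;> fin_cases j <;> simp [σp_eq, σm_eq, nUp]

lemma σm_mul_σp : σm * σp = 1 - nUp := by
  ext i j; fin_cases i <;> fin_cases j <;> simp [σp_eq, σm_eq, nUp]

lemma σp_mul_σp : σp * σp = 0 := by
  ext i j; fin_cases i <;> fin_cases j <;> simp [σp_eq]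

lemma σm_mul_σm : σm * σm = 0 := by
  ext i j; fin_cases i <;> fin_cases j <;> simp [σm_eq]

lemma nUp_mul_σp : nUp * σp = σp := by
  ext i j; fin_cases i <;> fin_cases j <;> simp [σp_eq, nUp]

lemma σp_mul_nUp : σp * nUp = 0 := by
  ext i j; fin_cases i <;> fin_cases j <;> simp [σp_eq, nUp]

lemma nUp_mul_σm : nUp * σm = 0 := by
  ext i j; fin_cases i <;> fin_cases j <;> simp [σm_eq, nUp]

lemma σm_mul_nUp : σm * nUp = σm := by
  ext i j; fin_cases i <;> fin_cases j <;> simp [σm_eq, nUp]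

lemma nUp_mul_nUp : nUp * nUp = nUp := by
  ext i j; fin_cases i <;> fin_cases j <;> simp [nUp]

lemma map_mul_map_mul_assoc {F M A : Type*} [Mul M] [Semigroup A] [FunLike F M A]
    [MulHomClass F M A] (f : F) (a b : M) (z : A) : f a * (f b * z) = f (a * b) * z := by
  rw [← mul_assoc, map_mul]

section TemperleyLieb

variable {A : Type*} [Ring A] [Algebra ℂ A]

def tlPair (φ ψ : Matrix (Fin 2) (Fin 2) ℂ →ₐ[ℂ] A) : A :=
  -(φ σm * ψ σp) - φ σp * ψ σm + Complex.I • (φ nUp - ψ nUp)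

variable {φ ψ χ : Matrix (Fin 2) (Fin 2) ℂ →ₐ[ℂ] A}

lemma tlPair_sq (h : ∀ a b, Commute (φ a) (ψ b)) : tlPair φ ψ ^ 2 = 0 := by
  rw [sq, tlPair]
  simp only [mul_add, add_mul, mul_sub, sub_mul, mul_neg, neg_mul, smul_mul_assoc,
    mul_smul_comm, mul_assoc, (h _ _).eq.symm, (h _ _).symm.left_comm, map_mul_map_mul_assoc,
    ← map_mul, σp_mul_σm, σm_mul_σp, σp_mul_σp, σm_mul_σm, nUp_mul_σp, σp_mul_nUp, nUp_mul_σm,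
    σm_mul_nUp, nUp_mul_nUp, map_zero, map_sub, map_one, mul_one, one_mul, mul_zero, zero_mul]
  match_scalars <;> ring_nf <;> simp [Complex.I_sq]

lemma tlPair_braid (hφψ : ∀ a b, Commute (φ a) (ψ b)) (hφχ : ∀ a b, Commute (φ a) (χ b))
    (hψχ : ∀ a b, Commute (ψ a) (χ b)) :
    tlPair φ ψ * tlPair ψ χ * tlPair φ ψ = tlPair φ ψ ∧
      tlPair ψ χ * tlPair φ ψ * tlPair ψ χ = tlPair ψ χ := by
  constructor <;>
  · rw [tlPair, tlPair]
    simp only [mul_add, add_mul, mul_sub, sub_mul, mul_neg, neg_mul, smul_mul_assoc,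
      mul_smul_comm, mul_assoc, (hφψ _ _).eq.symm, (hφψ _ _).symm.left_comm, (hφχ _ _).eq.symm,
      (hφχ _ _).symm.left_comm, (hψχ _ _).eq.symm, (hψχ _ _).symm.left_comm,
      map_mul_map_mul_assoc, ← map_mul, σp_mul_σm, σm_mul_σp, σp_mul_σp, σm_mul_σm, nUp_mul_σp,
      σp_mul_nUp, nUp_mul_σm, σm_mul_nUp, nUp_mul_nUp, map_zero, map_sub, map_one, mul_one,
      one_mul, mul_zero, zero_mul]
    match_scalars <;> ring_nf <;> simp [Complex.I_sq, Complex.I_pow_three]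

lemma commute_tlPair_of_commute {x : A} (hφ : ∀ a, Commute (φ a) x) (hψ : ∀ a, Commute (ψ a) x) :
    Commute (tlPair φ ψ) x :=
  (((hφ _).mul_left (hψ _)).neg_left.sub_left ((hφ _).mul_left (hψ _))).add_left
    (((hφ _).sub_left (hψ _)).smul_left _)

lemma commute_tlPair {φ' ψ' : Matrix (Fin 2) (Fin 2) ℂ →ₐ[ℂ] A}
    (hφφ' : ∀ a b, Commute (φ a) (φ' b)) (hφψ' : ∀ a b, Commute (φ a) (ψ' b))
    (hψφ' : ∀ a b, Commute (ψ a) (φ' b)) (hψψ' : ∀ a b, Commute (ψ a) (ψ' b)) :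
    Commute (tlPair φ ψ) (tlPair φ' ψ') :=
  commute_tlPair_of_commute
    (fun a => (commute_tlPair_of_commute (fun b => (hφφ' a b).symm)
      (fun b => (hφψ' a b).symm)).symm)
    (fun a => (commute_tlPair_of_commute (fun b => (hψφ' a b).symm)
      (fun b => (hψψ' a b).symm)).symm)

end TemperleyLieb

variable {N : ℕ}

section SiteOperators

lemma site_apply (p : Fin N) (M : Matrix (Fin 2) (Fin 2) ℂ) (v w : St N) :
    site N p M v w = if ∀ l, l ≠ p → v l = w l then M (v p) (w p) else 0 := by
  simp [site]

abbrev splitAt (p : Fin N) : St N ≃ Fin 2 × ({l // l ≠ p} → Fin 2) :=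
  Equiv.funSplitAt p (Fin 2)

lemma update_zero_eq_splitAt_symm (p : Fin N) (u : St N) :
    Function.update u p 0 = (splitAt p).symm (0, fun l => u l) := by
  ext l
  by_cases h : l = p <;> simp [h]

def siteHom (p : Fin N) : Matrix (Fin 2) (Fin 2) ℂ →ₐ[ℂ] Op N :=
  (reindexAlgEquiv ℂ ℂ (splitAt p).symm).toAlgHom.comp
    ((kroneckerAlgEquiv (Fin 2) ({l // l ≠ p} → Fin 2) ℂ).toAlgHom.comp
      Algebra.TensorProduct.includeLeft)

lemma siteHom_eq_reindex_kronecker (p : Fin N) (M : Matrix (Fin 2) (Fin 2) ℂ) :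
    siteHom p M = reindex (splitAt p).symm (splitAt p).symm (M ⊗ₖ 1) := by
  simp [siteHom]

lemma siteHom_apply (p : Fin N) (M : Matrix (Fin 2) (Fin 2) ℂ) :
    siteHom p M = site N p M := by
  ext v w
  simp [siteHom_eq_reindex_kronecker, site_apply, Matrix.one_apply, funext_iff]

lemma siteHom_diagonal (p : Fin N) (f : Fin 2 → ℂ) :
    siteHom p (diagonal f) = diagonal fun v => f (v p) := by
  rw [siteHom_eq_reindex_kronecker, ← diagonal_one, diagonal_kronecker_diagonal, reindex_apply,
    Equiv.symm_symm, submatrix_diagonal_equiv]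
  simp

/-- An operator that acts trivially on site `p` commutes with every operator at site `p`. -/
lemma commute_siteHom_of_apply_eq_ite {p : Fin N} {X : Op N}
    (hX : ∀ v w, X v w =
      if v p = w p then X (Function.update v p 0) (Function.update w p 0) else 0)
    (A : Matrix (Fin 2) (Fin 2) ℂ) : Commute (siteHom p A) X := by
  have hX_kron : X = reindex (splitAt p).symm (splitAt p).symm
      (1 ⊗ₖ of fun f g => X ((splitAt p).symm (0, f)) ((splitAt p).symm (0, g))) := by
    ext v w
    rw [hX, update_zero_eq_splitAt_symm, update_zero_eq_splitAt_symm]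
    simp [Matrix.one_apply]
  rw [hX_kron, siteHom_eq_reindex_kronecker]
  refine Commute.map ?_ (reindexAlgEquiv ℂ ℂ (splitAt p).symm)
  simp only [Commute, SemiconjBy, ← mul_kronecker_mul, mul_one, one_mul]

lemma commute_siteHom_of_ne {p q : Fin N} (hpq : p ≠ q) (A B : Matrix (Fin 2) (Fin 2) ℂ) :
    Commute (siteHom p A) (siteHom q B) := by
  refine commute_siteHom_of_apply_eq_ite (fun v w => ?_) A
  simp only [siteHom_apply, site_apply, Function.update_of_ne hpq.symm]
  by_cases h : v p = w p
  · rw [if_pos h]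
    congr 1
    refine propext (forall_congr' fun l => ?_)
    by_cases hl : l = p <;> simp [hl, h]
  · rw [if_neg h, if_neg fun hc => h (hc p hpq)]

lemma commute_siteHom_diagonal {p : Fin N} {d : St N → ℂ}
    (hd : ∀ v, d (Function.update v p 0) = d v) (A : Matrix (Fin 2) (Fin 2) ℂ) :
    Commute (siteHom p A) (diagonal d) := by
  refine commute_siteHom_of_apply_eq_ite (fun v w => ?_) A
  by_cases hvw : v = w
  · simp [hvw, hd]
  · have hupd : v p = w p → Function.update v p 0 ≠ Function.update w p 0 :=
      fun h heq => hvw (funext fun l => by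
        by_cases hl : l = p
        · rw [hl, h]
        · simpa [hl] using congrFun heq l)
    by_cases h : v p = w p <;> simp [hvw, h, hupd]

end SiteOperators

section JordanWigner

def jwString (N j : ℕ) (f : Fin 2 → ℂ) : Op N :=
  diagonal fun v => ∏ l ∈ univ.filter (fun l : Fin N => (l : ℕ) < j), f (v l)

lemma jwString_mul_jwString (j : ℕ) (f g : Fin 2 → ℂ) :
    jwString N j f * jwString N j g = jwString N j (f * g) := by
  simp [jwString, prod_mul_distrib]

lemma jwString_mul_inv (j : ℕ) {f : Fin 2 → ℂ} (hf : ∀ t, f t ≠ 0) :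
    jwString N j f * jwString N j f⁻¹ = 1 := by
  have hf' : f * f⁻¹ = 1 := funext fun t => mul_inv_cancel₀ (hf t)
  rw [jwString_mul_jwString, hf']
  simp [jwString]

lemma jwString_inv_mul (j : ℕ) {f : Fin 2 → ℂ} (hf : ∀ t, f t ≠ 0) :
    jwString N j f⁻¹ * jwString N j f = 1 := by
  rw [jwString_mul_jwString, mul_comm, ← jwString_mul_jwString, jwString_mul_inv j hf]

lemma jwString_succ {j : ℕ} (hj : j < N) (f : Fin 2 → ℂ) :
    jwString N (j + 1) f = jwString N j f * siteHom ⟨j, hj⟩ (diagonal f) := by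
  have hfilter : univ.filter (fun l : Fin N => (l : ℕ) < j + 1)
      = insert ⟨j, hj⟩ (univ.filter fun l : Fin N => (l : ℕ) < j) := by
    ext l
    simp only [mem_filter, mem_univ, true_and, mem_insert, Fin.ext_iff]
    omega
  rw [siteHom_diagonal, jwString, jwString, diagonal_mul_diagonal, hfilter]
  simp [prod_insert, mul_comm]

lemma commute_siteHom_jwString {p : Fin N} {j : ℕ} (hjp : j ≤ p)
    (A : Matrix (Fin 2) (Fin 2) ℂ) (f : Fin 2 → ℂ) : Commute (siteHom p A) (jwString N j f) := by
  refine commute_siteHom_diagonal (fun v => prod_congr rfl fun l hl => ?_) A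
  rw [Function.update_of_ne]
  rintro rfl
  simp only [mem_filter, mem_univ, true_and] at hl
  omega

lemma ad_eq {j : ℕ} (hj : j < N) :
    ad N j = Complex.I ^ j • (jwString N j (fun t => Complex.I * zval t) * siteHom ⟨j, hj⟩ σp) := by
  rw [siteHom_apply]; rfl

lemma an_eq {j : ℕ} (hj : j < N) :
    an N j = (Complex.I ^ j)⁻¹ •
      (jwString N j (fun t => Complex.I * zval t)⁻¹ * siteHom ⟨j, hj⟩ σm) := by
  rw [siteHom_apply]; rfl

lemma izval_ne_zero (t : Fin 2) : Complex.I * zval t ≠ 0 := by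
  fin_cases t <;> simp [zval]

lemma σm_mul_diagonal_izval : σm * diagonal (fun t => Complex.I * zval t) = Complex.I • σm := by
  ext i j; fin_cases i <;> fin_cases j <;> simp [σm_eq, zval]

lemma diagonal_izval_inv_mul_σp :
    diagonal (fun t => Complex.I * zval t)⁻¹ * σp = -Complex.I • σp := by
  ext i j; fin_cases i <;> fin_cases j <;> simp [σp_eq, zval]

lemma ad_mul_an {j : ℕ} (hj : j < N) : ad N j * an N j = siteHom ⟨j, hj⟩ nUp := by
  rw [ad_eq hj, an_eq hj, smul_mul_smul_comm, mul_inv_cancel₀ (pow_ne_zero _ Complex.I_ne_zero),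
    one_smul, mul_assoc, (commute_siteHom_jwString le_rfl σp _).left_comm, ← mul_assoc,
    jwString_mul_inv j izval_ne_zero, one_mul, ← map_mul, σp_mul_σm]

lemma an_mul_ad_succ {j : ℕ} (hj : j + 1 < N) :
    an N j * ad N (j + 1) = -(siteHom ⟨j, by omega⟩ σm * siteHom ⟨j + 1, hj⟩ σp) := by
  have hI : (Complex.I ^ j)⁻¹ * Complex.I ^ (j + 1) = Complex.I := by
    rw [pow_succ, inv_mul_cancel_left₀ (pow_ne_zero _ Complex.I_ne_zero)]
  rw [an_eq, ad_eq hj, jwString_succ (by omega), smul_mul_smul_comm, hI]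
  simp only [mul_assoc]
  rw [(commute_siteHom_jwString le_rfl σm _).left_comm, ← mul_assoc (jwString _ _ _),
    jwString_inv_mul j izval_ne_zero, one_mul, ← mul_assoc, ← map_mul, σm_mul_diagonal_izval,
    map_smul, smul_mul_assoc, smul_smul, Complex.I_mul_I, neg_one_smul]

lemma an_succ_mul_ad {j : ℕ} (hj : j + 1 < N) :
    an N (j + 1) * ad N j = -(siteHom ⟨j, by omega⟩ σp * siteHom ⟨j + 1, hj⟩ σm) := by
  have hI : (Complex.I ^ (j + 1))⁻¹ * Complex.I ^ j = -Complex.I := by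
    rw [pow_succ, mul_inv, mul_right_comm, inv_mul_cancel₀ (pow_ne_zero _ Complex.I_ne_zero),
      one_mul, Complex.inv_I]
  rw [an_eq hj, ad_eq (by omega), jwString_succ (by omega), smul_mul_smul_comm, hI]
  simp only [mul_assoc]
  rw [(commute_siteHom_jwString (Nat.le_succ j) σm _).left_comm,
    (commute_siteHom_jwString le_rfl _ _).left_comm, ← mul_assoc (jwString _ _ _),
    jwString_inv_mul j izval_ne_zero, one_mul,
    (commute_siteHom_of_ne (Fin.ne_of_val_ne (Nat.succ_ne_self j)) σm σp).eq, ← mul_assoc,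
    ← map_mul, diagonal_izval_inv_mul_σp, map_smul, smul_mul_assoc, smul_smul, neg_mul_neg,
    Complex.I_mul_I, neg_one_smul]

lemma eTL_eq_tlPair {j : ℕ} (hj : j + 1 < N) :
    eTL N j = tlPair (siteHom ⟨j, by omega⟩) (siteHom ⟨j + 1, hj⟩) := by
  rw [eTL, tlPair, an_mul_ad_succ hj, an_succ_mul_ad hj, ad_mul_an (by omega), ad_mul_an hj]
  abel

end JordanWigner

lemma commute_siteHom_of_val_ne {p q : ℕ} (hp : p < N) (hq : q < N) (hpq : p ≠ q)
    (a b : Matrix (Fin 2) (Fin 2) ℂ) : Commute (siteHom ⟨p, hp⟩ a) (siteHom ⟨q, hq⟩ b) :=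
  commute_siteHom_of_ne (Fin.ne_of_val_ne hpq) a b

lemma commute_eTL {i j : ℕ} (hij : i + 1 < j) (hj : j + 1 < N) :
    Commute (eTL N i) (eTL N j) := by
  rw [eTL_eq_tlPair (by omega), eTL_eq_tlPair hj]
  exact commute_tlPair (commute_siteHom_of_val_ne _ _ (by omega))
    (commute_siteHom_of_val_ne _ _ (by omega)) (commute_siteHom_of_val_ne _ _ (by omega))
    (commute_siteHom_of_val_ne _ _ (by omega))

end LatticeW

theorem LatticeW.tl_relations_q_i_general (N : ℕ) :
    (∀ j, j < N - 1 → eTL N j ^ 2 = 0) ∧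
    (∀ j, j + 1 < N - 1 →
      eTL N j * eTL N (j+1) * eTL N j = eTL N j ∧
      eTL N (j+1) * eTL N j * eTL N (j+1) = eTL N (j+1)) ∧
    (∀ i j, i < N - 1 → j < N - 1 → 1 < Nat.dist i j →
      eTL N i * eTL N j = eTL N j * eTL N i) := by
  refine ⟨fun j hj => ?_, fun j hj => ?_, fun i j hi hj hij => ?_⟩
  · rw [eTL_eq_tlPair (by omega)]
    exact tlPair_sq (commute_siteHom_of_val_ne _ _ (by omega))
  · rw [eTL_eq_tlPair (by omega), eTL_eq_tlPair (by omega)]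
    exact tlPair_braid (commute_siteHom_of_val_ne _ _ (by omega))
      (commute_siteHom_of_val_ne _ _ (by omega)) (commute_siteHom_of_val_ne _ _ (by omega))
  · rw [Nat.dist] at hij
    rcases Nat.lt_or_ge i j with h | h
    · exact (commute_eTL (by omega) (by omega)).eq
    · exact (commute_eTL (by omega) (by omega)).eq.symm

/-- Temperley–Lieb relations at zero fugacity for the XX densities. -/
theorem LatticeW.tl_relations_q_i (N : ℕ) (hN : 3 ≤ N) :
    (∀ j, j < N - 1 → eTL N j ^ 2 = 0) ∧
    (∀ j, j + 1 < N - 1 →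
      eTL N j * eTL N (j+1) * eTL N j = eTL N j ∧
      eTL N (j+1) * eTL N j * eTL N (j+1) = eTL N (j+1)) ∧
    (∀ i j, i < N - 1 → j < N - 1 → 1 < Nat.dist i j →
      eTL N i * eTL N j = eTL N j * eTL N i) :=
  LatticeW.tl_relations_q_i_general N
end
end

section
/- For every even integer N ≥ 4, the zero modes are linearly dependent: Ĥ^N_0 = Σ_{r=0}^{N/2−1} (−1)^{N/2−r−1} S_{N/2−r}(cos²(π·0/N), cos²(π·1/N), …, cos²(π(N/2−1)/N)) Ĥ^{2r}_0, and for each α ∈ {+, 0, −}, Ŵ^{α,N−2}_0 = Σ_{r=0}^{N/2−2} (−1)^{N/2−r} S_{N/2−r−1}(cos²(π·1/N), cos²(π·2/N), …, cos²(π(N/2−1)/N)) Ŵ^{α,2r}_0, where S_r(x_1,…,x_k) denotes the r-th elementary symmetric polynomial. -/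
open Matrix Complex BigOperators Finset

noncomputable section

/-!
At `n = 0` the Kronecker deltas force `j₂ = -j₁` (the shifts by `±N` never fit in `modeRange`),
so `Ĥ^r_0 = ∑_j (1 + (-1)^r) s(j) s(-j) cos^r(πj/N) η^+_j η^-_{-j}`, and likewise for `Ŵ^{α,r}_0`
with an extra factor `sin(πj/N)`. For `|j| < N/2` the number `cos²(πj/N)` is one of the
`cos²(πt/N)`, `0 ≤ t < N/2` (one with `t ≥ 1` if `j ≠ 0`, while the `j = 0` term of `Ŵ` vanishes),
hence a root of `∏_t (X - cos²(πt/N))`. Vieta's formulas then express its top power through the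
lower ones with elementary symmetric coefficients, which gives the relations coefficient by
coefficient.
-/

open Polynomial in
theorem Multiset.pow_eq_sum_esymm_of_mem {R : Type*} [CommRing R] {s : Multiset R} {n : ℕ}
    (hn : card s = n) {x : R} (hx : x ∈ s) :
    x ^ n = ∑ r ∈ Finset.range n, (-1) ^ (n - r - 1) * s.esymm (n - r) * x ^ r := by
  subst hn
  have hroot : ((s.map fun t => X - C t).prod).eval x = 0 := by
    rw [eval_multiset_prod]
    exact prod_eq_zero (mem_map.2 ⟨_, mem_map_of_mem _ hx, by simp⟩)
  have hesymm_zero : s.esymm 0 = 1 := by simp [esymm]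
  rw [prod_X_sub_X_eq_sum_esymm, eval_finsetSum, Finset.sum_range_succ'] at hroot
  simp only [eval_mul, eval_pow, eval_neg, eval_one, eval_C, eval_X, hesymm_zero, pow_zero,
    one_mul, Nat.sub_zero] at hroot
  rw [eq_neg_of_add_eq_zero_right hroot, ← Finset.sum_range_reflect, ← Finset.sum_neg_distrib]
  refine Finset.sum_congr rfl fun r hr => ?_
  obtain ⟨k, hk⟩ : ∃ k, card s - r = k + 1 := ⟨card s - r - 1, by grind⟩
  rw [show card s - 1 - r + 1 = card s - r by grind, show card s - (card s - r) = r by grind, hk,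
    Nat.add_sub_cancel, pow_succ]
  ring

theorem Finset.sum_smul_eq_sum_smul_sum {ι κ R M : Type*} [CommSemiring R] [AddCommMonoid M]
    [Module R M]
    {s : Finset ι} {t : Finset κ} {a : ι → R} {b : κ → ι → R} {c : κ → R} (v : ι → M)
    (h : ∀ i ∈ s, a i = ∑ k ∈ t, c k * b k i) :
    ∑ i ∈ s, a i • v i = ∑ k ∈ t, c k • ∑ i ∈ s, b k i • v i := by
  simp_rw [Finset.smul_sum, smul_smul]
  rw [Finset.sum_comm]
  exact Finset.sum_congr rfl fun i hi => by rw [h i hi, Finset.sum_smul]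

namespace LatticeW

variable {N : ℕ}

def ccos (N : ℕ) (j : ℤ) : ℂ := ((Real.cos (Real.pi * (j : ℝ) / (N : ℝ)) : ℝ) : ℂ)

def csin (N : ℕ) (j : ℤ) : ℂ := ((Real.sin (Real.pi * (j : ℝ) / (N : ℝ)) : ℝ) : ℂ)

lemma ccos_natAbs (j : ℤ) : ccos N j.natAbs = ccos N j := by
  rcases j.natAbs_eq with h | h <;> conv_rhs => rw [h]
  simp only [ccos, Int.cast_neg, mul_neg, neg_div, Real.cos_neg]

lemma cos_sq_eq_ccos_sq (t : ℕ) :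
    ((Real.cos (Real.pi * (t : ℝ) / (N : ℝ)))^2 : ℂ) = ccos N t ^ 2 := by
  simp [ccos]

lemma half_angle_sub_neg (j : ℤ) :
    Real.pi * ((j - -j : ℤ) : ℝ) / (2 * (N : ℝ)) = Real.pi * (j : ℝ) / (N : ℝ) := by
  rw [show Real.pi * ((j - -j : ℤ) : ℝ) = 2 * (Real.pi * j) by push_cast; ring,
    mul_div_mul_left _ _ two_ne_zero]

lemma neg_mem_modeRange (hev : Even N) {j : ℤ} (hj : j ∈ modeRange N) : -j ∈ modeRange N := by
  obtain ⟨M, rfl⟩ := hev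
  simp only [modeRange, Finset.mem_Icc] at *
  omega

lemma Hcoef_zero {r : ℕ} {j1 j2 : ℤ} (hj1 : j1 ∈ modeRange N) (hj2 : j2 ∈ modeRange N) :
    Hcoef N r 0 j1 j2 = if j1 + j2 = 0 then (1 + (-1) ^ r) * ccos N j1 ^ r else 0 := by
  simp only [modeRange, Finset.mem_Icc] at hj1 hj2
  simp only [Hcoef, kδ, neg_zero, add_zero, sub_zero,
    if_neg (show j1 - j2 ≠ N by omega), if_neg (show j1 - j2 ≠ -N by omega)]
  split_ifs with h
  · obtain rfl : j2 = -j1 := by omega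
    rw [half_angle_sub_neg, ccos]
    ring
  · ring

lemma Ucoef_zero {r : ℕ} {j1 j2 : ℤ} (hj1 : j1 ∈ modeRange N) (hj2 : j2 ∈ modeRange N) :
    Ucoef N r 0 j1 j2 = if j1 + j2 = 0 then (1 + (-1) ^ r) * csin N j1 * ccos N j1 ^ r else 0 := by
  simp only [modeRange, Finset.mem_Icc] at hj1 hj2
  simp only [Ucoef, kδ, neg_zero, add_zero, sub_zero, if_neg (show j1 - j2 ≠ -N by omega)]
  split_ifs with h
  · obtain rfl : j2 = -j1 := by omega
    rw [half_angle_sub_neg, ccos, csin]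
    ring
  · ring

lemma sum_modeRange_sum_eq_sum_neg {M : Type*} [AddCommMonoid M] (hev : Even N)
    (f : ℤ → ℤ → M) (hf : ∀ j1 ∈ modeRange N, ∀ j2 ∈ modeRange N, j1 + j2 ≠ 0 → f j1 j2 = 0) :
    ∑ j1 ∈ modeRange N, ∑ j2 ∈ modeRange N, f j1 j2 = ∑ j ∈ modeRange N, f j (-j) :=
  Finset.sum_congr rfl fun j1 hj1 => Finset.sum_eq_single_of_mem _ (neg_mem_modeRange hev hj1)
    fun j2 hj2 hne => hf j1 hj1 j2 hj2 (by omega)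

lemma Hhat_zero_eq_sum (hev : Even N) (r : ℕ) :
    Hhat N r 0 = ∑ j ∈ modeRange N,
      ((1 + (-1) ^ r) * (sfun N j * sfun N (-j)) * ccos N j ^ r) • (ηp N j * ηm N (-j)) := by
  rw [Hhat, sum_modeRange_sum_eq_sum_neg hev _ fun j1 hj1 j2 hj2 hne => by
    rw [Hcoef_zero hj1 hj2, if_neg hne, mul_zero, zero_smul]]
  refine Finset.sum_congr rfl fun j hj => ?_
  rw [Hcoef_zero hj (neg_mem_modeRange hev hj), if_pos (add_neg_cancel j)]
  congr 1
  ring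

def Wpair (N : ℕ) (α : Fin 3) (j1 j2 : ℤ) : Op N :=
  match α with
  | 0 => ηp N j1 * ηp N j2
  | 1 => ηp N j1 * ηm N j2 + ηm N j1 * ηp N j2
  | 2 => ηm N j1 * ηm N j2

lemma What_zero_eq_sum (hev : Even N) (α : Fin 3) (r : ℕ) :
    What N α r 0 = ∑ j ∈ modeRange N,
      ((1 + (-1) ^ r) * (sfun N j * sfun N (-j)) * csin N j * ccos N j ^ r) • Wpair N α j (-j) := by
  rw [What, sum_modeRange_sum_eq_sum_neg hev _ fun j1 hj1 j2 hj2 hne => by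
    rw [Ucoef_zero hj1 hj2, if_neg hne, mul_zero, zero_smul]]
  refine Finset.sum_congr rfl fun j hj => ?_
  rw [Ucoef_zero hj (neg_mem_modeRange hev hj), if_pos (add_neg_cancel j)]
  congr 1
  ring

/- The ascription `(t : ℝ)` makes Lean coerce `Multiset.range (N/2)` to a `Multiset ℝ` through the
monad structure of `Multiset`; the `pure_def`/`bind_def` lemmas undo this. -/
lemma ccos_sq_mem (hev : Even N) {j : ℤ} (hj : j ∈ modeRange N) :
    ccos N j ^ 2 ∈ (Multiset.range (N/2)).map
      (fun t => ((Real.cos (Real.pi * (t : ℝ) / (N : ℝ)))^2 : ℂ)) := by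
  obtain ⟨M, rfl⟩ := hev
  simp only [modeRange, Finset.mem_Icc] at hj
  simp only [Multiset.pure_def, Multiset.bind_def, Multiset.bind_singleton, Multiset.map_map,
    Multiset.mem_map, Multiset.mem_range, Function.comp_apply]
  exact ⟨j.natAbs, by omega, by rw [cos_sq_eq_ccos_sq, ccos_natAbs]⟩

lemma ccos_sq_mem_of_ne_zero (hev : Even N) {j : ℤ} (hj : j ∈ modeRange N) (hj0 : j ≠ 0) :
    ccos N j ^ 2 ∈ (Multiset.range (N/2 - 1)).map
      (fun t => ((Real.cos (Real.pi * ((t : ℝ) + 1) / (N : ℝ)))^2 : ℂ)) := by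
  obtain ⟨M, rfl⟩ := hev
  simp only [modeRange, Finset.mem_Icc] at hj
  simp only [Multiset.pure_def, Multiset.bind_def, Multiset.bind_singleton, Multiset.map_map,
    Multiset.mem_map, Multiset.mem_range, Function.comp_apply]
  refine ⟨j.natAbs - 1, by omega, ?_⟩
  rw [← Nat.cast_add_one, Nat.sub_add_cancel (Int.natAbs_pos.2 hj0), cos_sq_eq_ccos_sq,
    ccos_natAbs]

lemma Hhat_coeff_identity (hev : Even N) {j : ℤ} (hj : j ∈ modeRange N) :
    (1 + (-1) ^ N) * (sfun N j * sfun N (-j)) * ccos N j ^ N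
      = ∑ r ∈ Finset.range (N/2),
          ((-1 : ℂ) ^ (N/2 - r - 1) *
            (((Multiset.range (N/2)).map
                (fun t => ((Real.cos (Real.pi * (t : ℝ) / (N : ℝ)))^2 : ℂ))).esymm (N/2 - r)))
          * ((1 + (-1) ^ (2*r)) * (sfun N j * sfun N (-j)) * ccos N j ^ (2*r)) := by
  have hroot := Multiset.pow_eq_sum_esymm_of_mem (n := N/2) (by simp) (ccos_sq_mem hev hj)
  rw [← pow_mul, Nat.mul_div_cancel' hev.two_dvd] at hroot
  rw [hev.neg_one_pow, hroot, Finset.mul_sum]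
  refine Finset.sum_congr rfl fun r _ => ?_
  rw [(even_two_mul r).neg_one_pow, pow_mul]
  ring

lemma What_coeff_identity (hev : Even N) {j : ℤ} (hj : j ∈ modeRange N) :
    (1 + (-1) ^ (N - 2)) * (sfun N j * sfun N (-j)) * csin N j * ccos N j ^ (N - 2)
      = ∑ r ∈ Finset.range (N/2 - 1),
          ((-1 : ℂ) ^ (N/2 - r) *
            (((Multiset.range (N/2 - 1)).map
                (fun t => ((Real.cos (Real.pi * ((t : ℝ) + 1) / (N : ℝ)))^2 : ℂ))).esymm
                  (N/2 - r - 1)))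
          * ((1 + (-1) ^ (2*r)) * (sfun N j * sfun N (-j)) * csin N j * ccos N j ^ (2*r)) := by
  rcases eq_or_ne j 0 with rfl | hj0
  · simp [csin]
  have hroot := Multiset.pow_eq_sum_esymm_of_mem (n := N/2 - 1) (by simp)
    (ccos_sq_mem_of_ne_zero hev hj hj0)
  have hN : N - 2 = 2 * (N/2 - 1) := by obtain ⟨M, rfl⟩ := hev; omega
  rw [hN, (even_two_mul _).neg_one_pow, pow_mul, hroot, Finset.mul_sum]
  refine Finset.sum_congr rfl fun r hr => ?_
  have hr := Finset.mem_range.1 hr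
  have hsign : (-1 : ℂ) ^ (N/2 - r) = (-1) ^ (N/2 - 1 - r - 1) := by
    rw [show N/2 - r = N/2 - 1 - r - 1 + 2 by omega, pow_add]
    norm_num
  rw [hsign, show N/2 - r - 1 = N/2 - 1 - r by omega, (even_two_mul r).neg_one_pow, pow_mul]
  ring

end LatticeW

theorem LatticeW.zero_mode_linear_dependence_general (N : ℕ) (hev : Even N) :
    (Hhat N N 0
      = ∑ r ∈ Finset.range (N/2),
          ((-1 : ℂ) ^ (N/2 - r - 1) *
            (((Multiset.range (N/2)).map
                (fun t => ((Real.cos (Real.pi * (t : ℝ) / (N : ℝ)))^2 : ℂ))).esymm (N/2 - r)))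
            • Hhat N (2*r) 0) ∧
    (∀ α : Fin 3, What N α (N - 2) 0
      = ∑ r ∈ Finset.range (N/2 - 1),
          ((-1 : ℂ) ^ (N/2 - r) *
            (((Multiset.range (N/2 - 1)).map
                (fun t => ((Real.cos (Real.pi * ((t : ℝ) + 1) / (N : ℝ)))^2 : ℂ))).esymm (N/2 - r - 1)))
            • What N α (2*r) 0) := by
  refine ⟨?_, fun α => ?_⟩
  · simp only [Hhat_zero_eq_sum hev]
    exact Finset.sum_smul_eq_sum_smul_sum _ fun j hj => Hhat_coeff_identity hev hj
  · simp only [What_zero_eq_sum hev]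
    exact Finset.sum_smul_eq_sum_smul_sum _ fun j hj => What_coeff_identity hev hj

/-- linear dependence of the zero modes via elementary symmetric polynomials. -/
theorem LatticeW.zero_mode_linear_dependence (N : ℕ) (hN : 4 ≤ N) (hev : Even N) :
    (Hhat N N 0
      = ∑ r ∈ Finset.range (N/2),
          ((-1 : ℂ) ^ (N/2 - r - 1) *
            (((Multiset.range (N/2)).map
                (fun t => ((Real.cos (Real.pi * (t : ℝ) / (N : ℝ)))^2 : ℂ))).esymm (N/2 - r)))
            • Hhat N (2*r) 0) ∧
    (∀ α : Fin 3, What N α (N - 2) 0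
      = ∑ r ∈ Finset.range (N/2 - 1),
          ((-1 : ℂ) ^ (N/2 - r) *
            (((Multiset.range (N/2 - 1)).map
                (fun t => ((Real.cos (Real.pi * ((t : ℝ) + 1) / (N : ℝ)))^2 : ℂ))).esymm (N/2 - r - 1)))
            • What N α (2*r) 0) :=
  LatticeW.zero_mode_linear_dependence_general N hev
end
end
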